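/- Let K be a finite extension of ℚ_p with valuation v_p normalized by v_p(p) = 1, and let x ∈ K with v_p(x) > 0. Then for every integer i ≥ 0 the evaluation π_i(x) ∈ K of the power series π_i(T) at T = x converges, and v_p(π_i(x)) = v_p((1+x)^{p^i} − 1), both sides being ∞ exactly when (1+x)^{p^i} = 1. -/

import Mathlib

/-!
Write `y = π_i(x)`. For `|x| < 1`, evaluating power series with `ℤ_p`-coefficients at `x` is a
ring homomorphism compatible with substitution: the double series `∑ₖ eₖ π_i(T)ᵏ` converges
absolutely at `x` because `π_i(T)ᵏ` starts in degree `k`. Hence `E(π_i(T)) = (1 + T)^{p^i}` gives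
`(1 + x)^{p^i} = E(y) = 1 + y + r` with `|r| ≤ |y|²`, where `|y| ≤ |x| < 1` since `π_i(0) = 0`.
The norm of `K` is ultrametric, as it restricts to the `p`-adic norm, so
`|(1 + x)^{p^i} - 1| = |y|`, and `v` is an order-reversing function of the norm.
-/

open PowerSeries

noncomputable section

open scoped Classical in
/-- The series ℓ(T) = ∑_{i≥0} T^{p^i}/p^i over ℚ. -/
def lseries (p : ℕ) : PowerSeries ℚ :=
  PowerSeries.mk fun n => if ∃ i : ℕ, n = p ^ i then (n : ℚ)⁻¹ else 0

/-- Substitution `f(g)` of a power series `g` with zero constant coefficient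
into a power series `f`. -/
def psComp {R : Type*} [CommSemiring R] (g f : PowerSeries R) : PowerSeries R :=
  PowerSeries.mk fun n =>
    ∑ k ∈ Finset.range (n + 1), PowerSeries.coeff k f * PowerSeries.coeff n (g ^ k)

/-- The Artin–Hasse exponential E(T) = exp(∑ T^{p^i}/p^i) over ℚ. -/
def artinHasse (p : ℕ) : PowerSeries ℚ := psComp (lseries p) (PowerSeries.exp ℚ)

variable (p : ℕ) [Fact p.Prime]

/-- The property that `Ep` is the Artin–Hasse exponential regarded as a power
series with coefficients in `ℤ_p` (its coefficients lie in `ℤ_(p) ⊆ ℤ_p`). -/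
def IsArtinHasseZp (Ep : PowerSeries ℤ_[p]) : Prop :=
  PowerSeries.map (PadicInt.Coe.ringHom) Ep
    = PowerSeries.map (Rat.castHom ℚ_[p]) (artinHasse p)

/-- The property that `πfam i` is the power series `π_i(T) ∈ T·ℤ_p[[T]]`
with `E(π_i(T)) = (1+T)^{p^i}`. -/
def IsPiFamily (Ep : PowerSeries ℤ_[p]) (πfam : ℕ → PowerSeries ℤ_[p]) : Prop :=
  ∀ i : ℕ, PowerSeries.constantCoeff (πfam i) = 0
    ∧ psComp (πfam i) Ep = (1 + X) ^ p ^ i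

/-- A double series supported on `k ≤ n` with `‖F (k, n)‖ ≤ rⁿ` is dominated by `(√r)ᵏ (√r)ⁿ`. -/
lemma summable_norm_of_norm_le_pow_snd {E : Type*} [SeminormedAddCommGroup E] {F : ℕ × ℕ → E}
    {r : ℝ} (hr0 : 0 ≤ r) (hr1 : r < 1) (hle : ∀ k n, ‖F (k, n)‖ ≤ r ^ n)
    (hzero : ∀ k n, n < k → F (k, n) = 0) : Summable fun kn => ‖F kn‖ := by
  set s := √r
  have hs0 : 0 ≤ s := Real.sqrt_nonneg r
  have hs1 : s < 1 := by simpa using Real.sqrt_lt_sqrt hr0 hr1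
  have hgeo : Summable fun n : ℕ => s ^ n := summable_geometric_of_lt_one hs0 hs1
  refine (hgeo.mul_of_nonneg hgeo (fun n => by positivity) (fun n => by positivity)).of_nonneg_of_le
    (fun _ => norm_nonneg _) fun ⟨k, n⟩ => ?_
  rcases lt_or_ge n k with hnk | hkn
  · simp only [hzero k n hnk, norm_zero]
    positivity
  · calc ‖F (k, n)‖ ≤ r ^ n := hle k n
      _ = s ^ n * s ^ n := by rw [← mul_pow, Real.mul_self_sqrt hr0]
      _ ≤ s ^ k * s ^ n :=
        mul_le_mul_of_nonneg_right (pow_le_pow_of_le_one hs0 hs1.le hkn) (by positivity)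

namespace PowerSeries

variable {R K : Type*} [CommRing R] [NormedField K] {c : R →+* K} {x : K}

lemma coeff_pow_eq_zero_of_lt {f : PowerSeries R} (hf : constantCoeff f = 0) {k n : ℕ}
    (hn : n < k) : coeff n (f ^ k) = 0 := by
  obtain ⟨g, rfl⟩ := X_dvd_iff.mpr hf
  rw [mul_pow, coeff_X_pow_mul', if_neg (not_le.mpr hn)]

/-- `f(x)`, with the coefficients of `f` mapped to `K` by `c`; a junk value (`0`) when the series
does not converge. -/
def tsumEval (c : R →+* K) (f : PowerSeries R) (x : K) : K :=
  ∑' n, c (coeff n f) * x ^ n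

lemma norm_coeff_mul_pow_le (hc : ∀ a, ‖c a‖ ≤ 1) (f : PowerSeries R) (x : K) (n : ℕ) :
    ‖c (coeff n f) * x ^ n‖ ≤ ‖x‖ ^ n := by
  rw [norm_mul, norm_pow]
  exact mul_le_of_le_one_left (by positivity) (hc _)

lemma summable_norm_coeff_mul_pow (hc : ∀ a, ‖c a‖ ≤ 1) (hx : ‖x‖ < 1) (f : PowerSeries R) :
    Summable fun n => ‖c (coeff n f) * x ^ n‖ :=
  (summable_geometric_of_lt_one (norm_nonneg x) hx).of_nonneg_of_le (fun _ => norm_nonneg _)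
    (norm_coeff_mul_pow_le hc f x)

lemma tsumEval_one : tsumEval c 1 x = 1 := by
  rw [tsumEval, tsum_eq_single 0 fun n hn => by simp [coeff_one, hn]]
  simp

lemma tsumEval_X : tsumEval c X x = x := by
  rw [tsumEval, tsum_eq_single 1 fun n hn => by simp [coeff_X, hn]]
  simp

lemma norm_tsumEval_le [IsUltrametricDist K] (hc : ∀ a, ‖c a‖ ≤ 1) (hx : ‖x‖ < 1)
    {g : PowerSeries R} (hg : constantCoeff g = 0) : ‖tsumEval c g x‖ ≤ ‖x‖ :=
  IsUltrametricDist.norm_tsum_le_of_forall_le_of_nonneg (norm_nonneg x) fun n => by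
    rcases n with _ | n
    · simp [hg]
    · exact (norm_coeff_mul_pow_le hc g x _).trans
        (pow_le_of_le_one (norm_nonneg x) hx.le n.succ_ne_zero)

variable [CompleteSpace K]

lemma summable_coeff_mul_pow (hc : ∀ a, ‖c a‖ ≤ 1) (hx : ‖x‖ < 1) (f : PowerSeries R) :
    Summable fun n => c (coeff n f) * x ^ n :=
  (summable_norm_coeff_mul_pow hc hx f).of_norm

lemma tsumEval_add (hc : ∀ a, ‖c a‖ ≤ 1) (hx : ‖x‖ < 1) (f g : PowerSeries R) :
    tsumEval c (f + g) x = tsumEval c f x + tsumEval c g x := by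
  simp only [tsumEval, map_add, add_mul]
  exact (summable_coeff_mul_pow hc hx f).tsum_add (summable_coeff_mul_pow hc hx g)

lemma tsumEval_mul (hc : ∀ a, ‖c a‖ ≤ 1) (hx : ‖x‖ < 1) (f g : PowerSeries R) :
    tsumEval c (f * g) x = tsumEval c f x * tsumEval c g x := by
  rw [tsumEval, tsumEval, tsumEval, tsum_mul_tsum_eq_tsum_sum_antidiagonal_of_summable_norm
    (summable_norm_coeff_mul_pow hc hx f) (summable_norm_coeff_mul_pow hc hx g)]
  refine tsum_congr fun n => ?_
  rw [coeff_mul, map_sum, Finset.sum_mul]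
  refine Finset.sum_congr rfl fun kl hkl => ?_
  rw [← Finset.HasAntidiagonal.mem_antidiagonal.mp hkl, pow_add, map_mul]
  ring

lemma tsumEval_pow (hc : ∀ a, ‖c a‖ ≤ 1) (hx : ‖x‖ < 1) (f : PowerSeries R) (k : ℕ) :
    tsumEval c (f ^ k) x = tsumEval c f x ^ k := by
  induction k with
  | zero => simp only [pow_zero, tsumEval_one]
  | succ k ih => rw [pow_succ, tsumEval_mul hc hx, ih, pow_succ]

lemma tsumEval_psComp (hc : ∀ a, ‖c a‖ ≤ 1) (hx : ‖x‖ < 1) {g : PowerSeries R}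
    (hg : constantCoeff g = 0) (f : PowerSeries R) :
    tsumEval c (psComp g f) x = tsumEval c f (tsumEval c g x) := by
  set F : ℕ → ℕ → K := fun k n => c (coeff k f) * (c (coeff n (g ^ k)) * x ^ n)
  have hF_lt : ∀ k n, n < k → F k n = 0 := fun k n hnk => by
    simp [F, coeff_pow_eq_zero_of_lt hg hnk]
  have hF : Summable (Function.uncurry F) := by
    refine (summable_norm_of_norm_le_pow_snd (norm_nonneg x) hx (fun k n => ?_)
      fun k n => hF_lt k n).of_norm
    rw [Function.uncurry_apply_pair, norm_mul]
    exact (mul_le_of_le_one_left (norm_nonneg _) (hc _)).trans (norm_coeff_mul_pow_le hc _ x n)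
  have hcol : ∀ n, ∑' k, F k n = c (coeff n (psComp g f)) * x ^ n := fun n => by
    rw [tsum_eq_sum (s := Finset.range (n + 1)) fun k hk =>
      hF_lt k n (by simpa using hk)]
    simp only [psComp, coeff_mk, map_sum, map_mul, Finset.sum_mul, F, mul_assoc]
  calc tsumEval c (psComp g f) x = ∑' n, ∑' k, F k n := by simp only [tsumEval, hcol]
    _ = ∑' k, ∑' n, F k n := hF.tsum_comm
    _ = ∑' k, c (coeff k f) * tsumEval c (g ^ k) x := tsum_congr fun k => tsum_mul_left
    _ = tsumEval c f (tsumEval c g x) := by simp only [tsumEval_pow hc hx]; rfl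

lemma norm_tsumEval_sub_one [IsUltrametricDist K] (hc : ∀ a, ‖c a‖ ≤ 1) (hx : ‖x‖ < 1)
    {f : PowerSeries R} (hf0 : coeff 0 f = 1) (hf1 : coeff 1 f = 1) :
    ‖tsumEval c f x - 1‖ = ‖x‖ := by
  set r := ∑' n, c (coeff (n + 2) f) * x ^ (n + 2)
  have hsplit : tsumEval c f x - 1 = x + r := by
    have hf := summable_coeff_mul_pow hc hx f
    rw [tsumEval, hf.tsum_eq_zero_add, ((summable_nat_add_iff 1).mpr hf).tsum_eq_zero_add]
    simp [hf0, hf1, r]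
  have hr : ‖r‖ ≤ ‖x‖ ^ 2 :=
    IsUltrametricDist.norm_tsum_le_of_forall_le_of_nonneg (by positivity) fun n =>
      (norm_coeff_mul_pow_le hc f x _).trans
        (pow_le_pow_of_le_one (norm_nonneg x) hx.le (by omega))
  rcases eq_or_ne x 0 with rfl | hx0
  · simpa [hsplit] using hr
  · have hlt : ‖r‖ < ‖x‖ :=
      hr.trans_lt (pow_lt_self_of_lt_one₀ (norm_pos_iff.mpr hx0) hx one_lt_two)
    rw [hsplit, IsUltrametricDist.norm_add_eq_max_of_norm_ne_norm hlt.ne', max_eq_left hlt.le]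

lemma norm_tsumEval_eq_of_psComp_eq_one_add_X_pow [IsUltrametricDist K] (hc : ∀ a, ‖c a‖ ≤ 1)
    (hx : ‖x‖ < 1) {E g : PowerSeries R} (hE0 : coeff 0 E = 1) (hE1 : coeff 1 E = 1)
    (hg : constantCoeff g = 0) {N : ℕ} (hgE : psComp g E = (1 + X) ^ N) :
    ‖tsumEval c g x‖ = ‖(1 + x) ^ N - 1‖ := by
  have hy : ‖tsumEval c g x‖ < 1 := (norm_tsumEval_le hc hx hg).trans_lt hx
  have hE : (1 + x) ^ N = tsumEval c E (tsumEval c g x) := by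
    rw [← tsumEval_psComp hc hx hg, hgE, tsumEval_pow hc hx, tsumEval_add hc hx, tsumEval_one,
      tsumEval_X]
  rw [hE, norm_tsumEval_sub_one hc hy hE0 hE1]

end PowerSeries

lemma IsUltrametricDist.of_norm_algebraMap {F K : Type*} [NormedField F] [IsUltrametricDist F]
    [NormedDivisionRing K] [Algebra F K] (h : ∀ y : F, ‖algebraMap F K y‖ = ‖y‖) :
    IsUltrametricDist K :=
  isUltrametricDist_of_forall_norm_natCast_le_one fun n => by
    rw [← map_natCast (algebraMap F K), h]
    exact norm_natCast_le_one F n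

section Valuation

variable {K : Type*} [NormedField K] {v : K → WithTop ℚ}

lemma val_eq_val_of_norm_eq (hvnorm : ∀ y z : K, v y ≤ v z ↔ ‖z‖ ≤ ‖y‖) {y z : K}
    (h : ‖y‖ = ‖z‖) : v y = v z :=
  le_antisymm ((hvnorm y z).2 h.ge) ((hvnorm z y).2 h.le)

lemma norm_lt_one_of_val_pos (hv1 : v 1 ≠ ⊤) (hvmul : ∀ y z : K, v (y * z) = v y + v z)
    (hvnorm : ∀ y z : K, v y ≤ v z ↔ ‖z‖ ≤ ‖y‖) {x : K} (hx : 0 < v x) : ‖x‖ < 1 := by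
  have hv1_eq : v 1 = 0 := by
    have h := hvmul 1 1
    rw [one_mul] at h
    lift v 1 to ℚ using hv1 with q
    norm_cast at h ⊢
    linarith
  have h : ¬ v x ≤ v 1 := by rwa [hv1_eq, not_le]
  rw [hvnorm] at h
  simpa using h

end Valuation

omit [Fact p.Prime] in
lemma coeff_zero_artinHasse : coeff 0 (artinHasse p) = 1 := by
  simp [artinHasse, psComp]

omit [Fact p.Prime] in
lemma coeff_one_artinHasse : coeff 1 (artinHasse p) = 1 := by
  have h : ∃ i : ℕ, 1 = p ^ i := ⟨0, (pow_zero p).symm⟩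
  simp [artinHasse, psComp, Finset.sum_range_succ, lseries, h]

section ArtinHasse

variable {p} {Ep : PowerSeries ℤ_[p]}

lemma IsArtinHasseZp.coe_coeff (hEp : IsArtinHasseZp p Ep) (n : ℕ) :
    PadicInt.Coe.ringHom (coeff n Ep) = ((coeff n (artinHasse p) : ℚ) : ℚ_[p]) := by
  simpa [coeff_map] using congrArg (coeff n) hEp

lemma IsArtinHasseZp.coeff_zero (hEp : IsArtinHasseZp p Ep) : coeff 0 Ep = 1 :=
  PadicInt.ext <| (hEp.coe_coeff 0).trans <| by rw [coeff_zero_artinHasse]; simp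

lemma IsArtinHasseZp.coeff_one (hEp : IsArtinHasseZp p Ep) : coeff 1 Ep = 1 :=
  PadicInt.ext <| (hEp.coe_coeff 1).trans <| by rw [coeff_one_artinHasse]; simp

end ArtinHasse

theorem statement3
    (Ep : PowerSeries ℤ_[p]) (hEp : IsArtinHasseZp p Ep)
    (πfam : ℕ → PowerSeries ℤ_[p]) (hπ : IsPiFamily p Ep πfam)
    (K : Type*) [NormedField K] [CompleteSpace K]
    [Algebra ℚ_[p] K]
    (hiso : ∀ y : ℚ_[p], ‖algebraMap ℚ_[p] K y‖ = ‖y‖)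
    (v : K → WithTop ℚ)
    (hv0 : ∀ y : K, v y = ⊤ ↔ y = 0)
    (hvmul : ∀ y z : K, v (y * z) = v y + v z)
    (hvnorm : ∀ y z : K, v y ≤ v z ↔ ‖z‖ ≤ ‖y‖)
    (x : K) (hx : 0 < v x) (i : ℕ) :
    Summable (fun j : ℕ =>
      algebraMap ℚ_[p] K (PadicInt.Coe.ringHom (PowerSeries.coeff j (πfam i))) * x ^ j)
    ∧ v (∑' j : ℕ,
        algebraMap ℚ_[p] K (PadicInt.Coe.ringHom (PowerSeries.coeff j (πfam i))) * x ^ j)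
        = v ((1 + x) ^ p ^ i - 1)
    ∧ (v (∑' j : ℕ,
        algebraMap ℚ_[p] K (PadicInt.Coe.ringHom (PowerSeries.coeff j (πfam i))) * x ^ j)
          = ⊤ ↔ (1 + x) ^ p ^ i = 1) := by
  obtain ⟨hπ0, hπE⟩ := hπ i
  let c : ℤ_[p] →+* K := (algebraMap ℚ_[p] K).comp PadicInt.Coe.ringHom
  have hc : ∀ a, ‖c a‖ ≤ 1 := fun a => by
    rw [RingHom.comp_apply, hiso]
    exact (PadicInt.padic_norm_e_of_padicInt a).trans_le (PadicInt.norm_le_one a)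
  have := IsUltrametricDist.of_norm_algebraMap hiso
  have hx1 : ‖x‖ < 1 := norm_lt_one_of_val_pos (fun h => one_ne_zero ((hv0 1).1 h)) hvmul hvnorm hx
  have hv : v (tsumEval c (πfam i) x) = v ((1 + x) ^ p ^ i - 1) := val_eq_val_of_norm_eq hvnorm
    (norm_tsumEval_eq_of_psComp_eq_one_add_X_pow hc hx1 hEp.coeff_zero hEp.coeff_one hπ0 hπE)
  refine ⟨summable_coeff_mul_pow hc hx1 _, hv, ?_⟩
  change v (tsumEval c (πfam i) x) = ⊤ ↔ _
  rw [hv, hv0, sub_eq_zero]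

end
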